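/- Let G be a finite simple graph that is a domain, let H be a connected component of G^{0-1}, and let A ∪ B be the vertex bipartition of H. Then there exists a basic 1-cover a of G with a(v)=1 for all v ∈ A and a(v)=0 for all v ∈ B, such that the function b defined by b(v)=1−a(v) for vertices v of H and b(v)=a(v) for all other vertices is also a basic 1-cover of G (so b is 1 on B and 0 on A). -/

import Mathlib

variable {V : Type*} [Fintype V] [DecidableEq V]

/-- For `k ∈ ℕ`, a `k`-cover of `G` is a function from the vertices of `G` to `ℕ` that is
not identically zero and whose values at the two endpoints of any edge sum to at least `k`. -/
def IsCover (G : SimpleGraph V) (k : ℕ) (a : V → ℕ) : Prop :=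
  a ≠ 0 ∧ ∀ i j : V, G.Adj i j → k ≤ a i + a j

/-- A `k`-cover is basic if it is not the pointwise sum of a `k`-cover and a `0`-cover. -/
def IsBasicCover (G : SimpleGraph V) (k : ℕ) (a : V → ℕ) : Prop :=
  IsCover G k a ∧ ¬ ∃ b c : V → ℕ, IsCover G k b ∧ IsCover G 0 c ∧ a = b + c

/-- `G` is a domain if for all `s, t` with `s + t ≥ 1`, the pointwise sum of any `s` basic
`1`-covers and any `t` basic `2`-covers of `G` is a basic `(s + 2t)`-cover. -/
def IsGraphDomain (G : SimpleGraph V) : Prop :=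
  ∀ s t : ℕ, 1 ≤ s + t → ∀ f : Fin s → V → ℕ, ∀ g : Fin t → V → ℕ,
    (∀ p, IsBasicCover G 1 (f p)) → (∀ q, IsBasicCover G 2 (g q)) →
    IsBasicCover G (s + 2 * t) ((∑ p, f p) + (∑ q, g q))

/-- `G` is unmixed if all basic `1`-covers of `G` have the same norm. -/
def IsUnmixed (G : SimpleGraph V) : Prop :=
  ∀ a b : V → ℕ, IsBasicCover G 1 a → IsBasicCover G 1 b → ∑ v, a v = ∑ v, b v

/-- `G` satisfies WSC if it has at least one edge and every non-isolated vertex `i` has a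
neighbour `j` such that any neighbour of `i` is adjacent to any neighbour of `j`. -/
def SatisfiesWSC (G : SimpleGraph V) : Prop :=
  (∃ i j : V, G.Adj i j) ∧
    ∀ i : V, (∃ x, G.Adj i x) →
      ∃ j : V, G.Adj i j ∧ ∀ i' j' : V, G.Adj i i' → G.Adj j j' → G.Adj i' j'

/-- `G` satisfies SC if for every edge `{i, j}`, every neighbour `i'` of `i` and every
neighbour `j'` of `j`, one has `i' ≠ j'` and `{i', j'}` is an edge. -/
def SatisfiesSC (G : SimpleGraph V) : Prop :=
  ∀ i j i' j' : V, G.Adj i j → G.Adj i i' → G.Adj j j' → i' ≠ j' ∧ G.Adj i' j'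

/-- `G` satisfies MSC if the set of non-isolated vertices of `G` is nonempty and carries a
perfect matching `M` (a matching of `G` whose vertex set is exactly the set of non-isolated
vertices) such that for every edge `{i, j}` of `M`, every neighbour `i'` of `i` in `G` and
every neighbour `j'` of `j` in `G`, `{i', j'}` is an edge of `G`. -/
def SatisfiesMSC (G : SimpleGraph V) : Prop :=
  ∃ M : G.Subgraph, M.verts = {v : V | ∃ w, G.Adj v w} ∧ M.verts.Nonempty ∧
    M.IsMatching ∧
    ∀ i j : V, M.Adj i j → ∀ i' j' : V, G.Adj i i' → G.Adj j j' → G.Adj i' j'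

/-- The graph `G^{0-1}`: its edges are the edges `{i, j}` of `G` such that `a i + a j = 1`
for every basic `1`-cover `a` of `G`.  (Its vertex set is interpreted as the set of
non-isolated vertices of `G`; here it is defined on all of `V`, and the vertices of `G`
that are isolated stay isolated, so they can be excluded explicitly when needed.) -/
def ZeroOne (G : SimpleGraph V) : SimpleGraph V where
  Adj i j := G.Adj i j ∧ ∀ a : V → ℕ, IsBasicCover G 1 a → a i + a j = 1
  symm := by
    constructor
    intro i j h
    exact ⟨h.1.symm, fun a ha => by rw [add_comm]; exact h.2 a ha⟩
  loopless := by
    constructor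
    intro i h
    exact G.loopless.irrefl i h.1

/-- `A ∪ B` is a vertex bipartition of the connected component `C` of `H`, and the edges of
`H` inside `C` are exactly the pairs `{x, y}` with `x ∈ A` and `y ∈ B` (so the component is
a complete bipartite graph on `A ∪ B`). -/
def IsCompBipartition (H : SimpleGraph V) (C : H.ConnectedComponent) (A B : Set V) : Prop :=
  A ∪ B = C.supp ∧ Disjoint A B ∧
    ∀ x ∈ C.supp, ∀ y ∈ C.supp,
      (H.Adj x y ↔ (x ∈ A ∧ y ∈ B) ∨ (x ∈ B ∧ y ∈ A))

/-- The graph `G⁺` obtained from `G` by attaching a pendant vertex to each vertex of `G`: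
`Sum.inl v` is the original vertex `v`, and `Sum.inr v` is the pendant attached to `v`. -/
def GPlus (G : SimpleGraph V) : SimpleGraph (V ⊕ V) where
  Adj x y :=
    match x, y with
    | Sum.inl u, Sum.inl v => G.Adj u v
    | Sum.inl u, Sum.inr v => u = v
    | Sum.inr u, Sum.inl v => u = v
    | Sum.inr _, Sum.inr _ => False
  symm := by
    constructor
    rintro (u | u) (v | v) h
    · exact h.symm
    · exact h.symm
    · exact h.symm
    · exact h.elim
  loopless := by
    constructor
    rintro (u | u) h
    · exact G.loopless.irrefl u h
    · exact h

/-!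
Basic `1`-covers of a graph with an edge are exactly the indicators of minimal vertex covers,
i.e. of complements of maximal independent sets. In a domain the sum of all basic `1`-covers is
itself basic, so every non-isolated vertex lies on an edge where that sum is tight; there every
basic cover is tight, so every non-isolated vertex lies on a `0-1` edge.

Take the independent set consisting of `B` and of the `0-1` partners (outside `C`) of the
neighbours of `A` outside `C`, and let `a` be a basic cover below the indicator of its
complement. Then `a` is `1` on `A` and `0` on `B`, and it is `1` on every vertex outside `C`
adjacent to `C`. The latter is exactly what keeps the edges between `C` and the rest covered
when the values of `a` on `C` are swapped, and `0-1` partners of vertices outside `C` stay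
outside `C`, so the swapped function is again a minimal vertex cover.
-/

section Covers

variable {G : SimpleGraph V}

omit [DecidableEq V] in
theorem IsCover.exists_isBasicCover_le {k : ℕ} {c : V → ℕ} (hc : IsCover G k c) :
    ∃ a, IsBasicCover G k a ∧ a ≤ c := by
  induction h : ∑ v, c v using Nat.strong_induction_on generalizing c with
  | _ n ih =>
    by_cases hbasic : IsBasicCover G k c
    · exact ⟨c, hbasic, le_rfl⟩
    obtain ⟨b, d, hb, hd, rfl⟩ : ∃ b d, IsCover G k b ∧ IsCover G 0 d ∧ c = b + d := by
      by_contra hno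
      exact hbasic ⟨hc, hno⟩
    obtain ⟨v, hv⟩ : ∃ v, d v ≠ 0 := Function.ne_iff.mp hd.1
    have hlt : ∑ w, b w < n := h ▸ Finset.sum_lt_sum (fun w _ => Nat.le_add_right (b w) (d w))
      ⟨v, Finset.mem_univ v, by simp only [Pi.add_apply]; omega⟩
    obtain ⟨a, ha, hab⟩ := ih _ hlt hb rfl
    exact ⟨a, ha, hab.trans le_self_add⟩

omit [Fintype V] in
theorem IsBasicCover.not_isCover_sub_single {k : ℕ} {c : V → ℕ} (hc : IsBasicCover G k c)
    {v : V} (hv : 0 < c v) : ¬ IsCover G k (c - Pi.single v 1) := by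
  refine fun hcov => hc.2 ⟨_, Pi.single v 1, hcov, ⟨by simp, by simp⟩, ?_⟩
  ext u
  simp only [Pi.add_apply, Pi.sub_apply, Pi.single_apply]
  split_ifs with hu
  · subst hu
    omega
  · omega

omit [Fintype V] in
theorem IsBasicCover.le_one {c : V → ℕ} (hc : IsBasicCover G 1 c) (v : V) : c v ≤ 1 := by
  by_contra! hv
  refine hc.not_isCover_sub_single (v := v) (by omega)
    ⟨Function.ne_iff.mpr ⟨v, ?_⟩, fun i j hij => ?_⟩
  · simp only [Pi.sub_apply, Pi.single_eq_same, Pi.zero_apply]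
    omega
  · have := hc.1.2 i j hij
    simp only [Pi.sub_apply, Pi.single_apply]
    split_ifs <;> subst_vars <;> omega

omit [Fintype V] in
theorem IsBasicCover.exists_adj_add_eq {k : ℕ} {c : V → ℕ} (hc : IsBasicCover G k c)
    {v w : V} (hvw : v ≠ w) (hv : 0 < c v) (hw : 0 < c w) : ∃ u, G.Adj v u ∧ c v + c u = k := by
  by_contra! hslack
  refine hc.not_isCover_sub_single hv ⟨Function.ne_iff.mpr ⟨w, ?_⟩, fun i j hij => ?_⟩
  · simp only [Pi.sub_apply, Pi.single_eq_of_ne hvw.symm, Pi.zero_apply]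
    omega
  have := hc.1.2 i j hij
  simp only [Pi.sub_apply, Pi.single_apply]
  split_ifs with hi hj hj
  · exact absurd (hi.trans hj.symm) hij.ne
  · subst hi
    have := hslack j hij
    omega
  · subst hj
    have := hslack i hij.symm
    omega
  · omega

omit [Fintype V] [DecidableEq V] in
theorem isBasicCover_of_le_one {c : V → ℕ} (hc : IsCover G 1 c) (hle : ∀ v, c v ≤ 1)
    (hmin : ∀ v, c v = 1 → ∃ w, G.Adj v w ∧ c w = 0) : IsBasicCover G 1 c := by
  refine ⟨hc, fun ⟨b, d, hb, hd, hcbd⟩ => ?_⟩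
  have hval (u : V) : c u = b u + d u := congrFun hcbd u
  obtain ⟨v, hdv⟩ : ∃ v, d v ≠ 0 := Function.ne_iff.mp hd.1
  have hbv := hval v
  have hcv := hle v
  obtain ⟨w, hvw, hw⟩ := hmin v (by omega)
  have := hb.2 v w hvw
  have := hval w
  omega

omit [Fintype V] [DecidableEq V] in
theorem SimpleGraph.IsIndepSet.isCover_indicator_compl {I : Set V} (hI : G.IsIndepSet I)
    {x : V} (hx : x ∉ I) : IsCover G 1 (Iᶜ.indicator 1) := by
  refine ⟨Function.ne_iff.mpr ⟨x, by simp [hx]⟩, fun i j hij => ?_⟩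
  by_cases hi : i ∈ I
  · have hj : j ∉ I := fun hj => hI hi hj hij.ne hij
    simp [hj]
  · simp [hi]

theorem exists_isBasicCover_eq_one_eq_zero {v w : V} (h : G.Adj v w) :
    ∃ a, IsBasicCover G 1 a ∧ a v = 1 ∧ a w = 0 := by
  have hw : G.IsIndepSet {w} := Set.pairwise_singleton w _
  obtain ⟨a, ha, hle⟩ := (hw.isCover_indicator_compl h.ne).exists_isBasicCover_le
  have haw : a w = 0 := by simpa using hle w
  have := ha.1.2 v w h
  exact ⟨a, ha, by have := ha.le_one v; omega, haw⟩

end Covers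

theorem finite_setOf_isBasicCover (G : SimpleGraph V) : {c | IsBasicCover G 1 c}.Finite :=
  (Set.finite_Iic 1).subset fun _ hc v => hc.le_one v

section Domain

variable {G : SimpleGraph V}

omit [Fintype V] [DecidableEq V] in
theorem IsGraphDomain.isBasicCover_sum (hG : IsGraphDomain G) {F : Finset (V → ℕ)}
    (hF : F.Nonempty) (h : ∀ c ∈ F, IsBasicCover G 1 c) :
    IsBasicCover G F.card (∑ c ∈ F, c) := by
  have := hG F.card 0 (by simpa using hF.card_pos) (fun i => F.equivFin.symm i) Fin.elim0
    (fun i => h _ (F.equivFin.symm i).2) fun q => q.elim0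
  rwa [Fin.sum_univ_zero, mul_zero, add_zero, add_zero,
    Equiv.sum_comp F.equivFin.symm (fun c => (c : V → ℕ)), Finset.sum_coe_sort F fun c => c] at this

theorem IsGraphDomain.exists_zeroOne_adj (hG : IsGraphDomain G) {v w : V} (h : G.Adj v w) :
    ∃ u, (ZeroOne G).Adj v u := by
  set F := (finite_setOf_isBasicCover G).toFinset
  have hmem : ∀ {c}, c ∈ F ↔ IsBasicCover G 1 c := Set.Finite.mem_toFinset _
  have hF : ∀ c ∈ F, IsBasicCover G 1 c := fun c => hmem.mp
  have hpos : ∀ {p q}, G.Adj p q → 0 < (∑ c ∈ F, c) p := fun {p q} hpq => by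
    obtain ⟨a, ha, hap, -⟩ := exists_isBasicCover_eq_one_eq_zero hpq
    rw [Finset.sum_apply]
    exact (by omega : 0 < a p).trans_le
      (Finset.single_le_sum (f := fun c => c p) (fun _ _ => Nat.zero_le _) (hmem.mpr ha))
  obtain ⟨a, ha, -⟩ := exists_isBasicCover_eq_one_eq_zero h
  obtain ⟨u, hvu, htight⟩ := (hG.isBasicCover_sum ⟨a, hmem.mpr ha⟩ hF
    ).exists_adj_add_eq h.ne (hpos h) (hpos h.symm)
  refine ⟨u, hvu, fun c hc => ?_⟩
  simp only [Finset.sum_apply, ← Finset.sum_add_distrib, Finset.card_eq_sum_ones] at htight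
  exact ((Finset.sum_eq_sum_iff_of_le fun d hd => (hF d hd).1.2 v u hvu).mp htight.symm c
    (hmem.mpr hc)).symm

end Domain

namespace IsCompBipartition

section General

omit [Fintype V] [DecidableEq V]

variable {H : SimpleGraph V} {C : H.ConnectedComponent} {A B : Set V}

theorem symm (hb : IsCompBipartition H C A B) : IsCompBipartition H C B A :=
  ⟨by rw [Set.union_comm, hb.1], hb.2.1.symm,
    fun x hx y hy => (hb.2.2 x hx y hy).trans (by tauto)⟩

theorem left_subset (hb : IsCompBipartition H C A B) : A ⊆ C.supp :=
  hb.1 ▸ Set.subset_union_left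

theorem mem_or (hb : IsCompBipartition H C A B) {v : V} (hv : v ∈ C.supp) : v ∈ A ∨ v ∈ B := by
  rwa [← hb.1] at hv

theorem adj (hb : IsCompBipartition H C A B) {x y : V} (hx : x ∈ A) (hy : y ∈ B) : H.Adj x y :=
  (hb.2.2 x (hb.left_subset hx) y (hb.symm.left_subset hy)).mpr (.inl ⟨hx, hy⟩)

end General

variable {G : SimpleGraph V} {C : (ZeroOne G).ConnectedComponent} {A B : Set V}

theorem nonempty_left_right (hG : IsGraphDomain G) (hC : C.supp ⊆ {v | ∃ w, G.Adj v w})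
    (hb : IsCompBipartition (ZeroOne G) C A B) : A.Nonempty ∧ B.Nonempty := by
  obtain ⟨v, hv⟩ := C.nonempty_supp
  obtain ⟨w₀, hvw₀⟩ := hC hv
  obtain ⟨w, hvw⟩ := hG.exists_zeroOne_adj hvw₀
  rcases (hb.2.2 v hv w ((C.mem_supp_congr_adj hvw).mp hv)).mp hvw with ⟨hvA, hwB⟩ | ⟨hvB, hwA⟩
  exacts [⟨⟨v, hvA⟩, ⟨w, hwB⟩⟩, ⟨⟨w, hwA⟩, ⟨v, hvB⟩⟩]

theorem exists_isBasicCover (hb : IsCompBipartition (ZeroOne G) C A B) {x y : V} (hx : x ∈ A)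
    (hy : y ∈ B) : ∃ a, IsBasicCover G 1 a ∧ (∀ v ∈ A, a v = 1) ∧ ∀ v ∈ B, a v = 0 := by
  obtain ⟨a, ha, hax, hay⟩ := exists_isBasicCover_eq_one_eq_zero (hb.adj hx hy).1
  refine ⟨a, ha, fun v hv => ?_, fun v hv => ?_⟩
  · have := (hb.adj hv hy).2 a ha
    omega
  · have := (hb.adj hx hv).2 a ha
    omega

theorem not_adj_of_mem_right (hb : IsCompBipartition (ZeroOne G) C A B) {x y y' : V}
    (hx : x ∈ A) (hy : y ∈ B) (hy' : y' ∈ B) : ¬ G.Adj y y' := fun h => by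
  obtain ⟨a, ha, -, haB⟩ := hb.exists_isBasicCover hx hy
  have := ha.1.2 y y' h
  rw [haB y hy, haB y' hy'] at this
  omega

end IsCompBipartition

/-- A basic `1`-cover vanishing on `A` is `1` on the neighbours of `A`, hence vanishes on their
`0-1` partners. -/
def outerPartners {G : SimpleGraph V} (C : (ZeroOne G).ConnectedComponent) (A : Set V) : Set V :=
  {w | w ∉ C.supp ∧ ∃ u, (ZeroOne G).Adj u w ∧ ∃ z ∈ A, G.Adj u z}

namespace IsCompBipartition

variable {G : SimpleGraph V} {C : (ZeroOne G).ConnectedComponent} {A B : Set V}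

theorem isIndepSet_union_outerPartners (hb : IsCompBipartition (ZeroOne G) C A B) {x y : V}
    (hx : x ∈ A) (hy : y ∈ B) : G.IsIndepSet (B ∪ outerPartners C A) := by
  have vanish : ∀ {c w}, IsBasicCover G 1 c → w ∈ outerPartners C A →
      (∀ v ∈ A, c v = 0) → c w = 0 := by
    rintro c w hc ⟨-, u, huw, z, hz, huz⟩ hcA
    have := hc.1.2 u z huz
    have := huw.2 c hc
    have := hcA z hz
    omega
  have not_adj_right : ∀ {v w}, v ∈ B → w ∈ outerPartners C A → ¬ G.Adj v w := by
    intro v w hv hw hvw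
    refine hw.1 ((C.mem_supp_congr_adj (G := ZeroOne G) ⟨hvw, fun c hc => ?_⟩).mp
      (hb.symm.left_subset hv))
    have hcx := (hb.adj hx hv).2 c hc
    have hcw := hc.1.2 v w hvw
    have := hc.le_one w
    by_cases h0 : c x = 0
    · have := vanish hc hw fun v' hv' => by have := (hb.adj hv' hv).2 c hc; omega
      omega
    · omega
  obtain ⟨a, ha, -, haA⟩ := hb.symm.exists_isBasicCover hy hx
  rintro v (hv | hv) w (hw | hw) - hvw
  · exact hb.not_adj_of_mem_right hx hv hw hvw
  · exact not_adj_right hv hw hvw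
  · exact not_adj_right hw hv hvw.symm
  · have := ha.1.2 v w hvw
    rw [vanish ha hv haA, vanish ha hw haA] at this
    omega

theorem exists_isBasicCover_eq_one_on_boundary (hG : IsGraphDomain G)
    (hb : IsCompBipartition (ZeroOne G) C A B) {x y : V} (hx : x ∈ A) (hy : y ∈ B) :
    ∃ a, IsBasicCover G 1 a ∧ (∀ v ∈ A, a v = 1) ∧ (∀ v ∈ B, a v = 0) ∧
      ∀ u z, u ∉ C.supp → z ∈ C.supp → G.Adj u z → a u = 1 := by
  have hx' : x ∉ B ∪ outerPartners C A := by
    rintro (hxB | hxP)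
    exacts [Set.disjoint_left.mp hb.2.1 hx hxB, hxP.1 (hb.left_subset hx)]
  obtain ⟨a, ha, hle⟩ :=
    ((hb.isIndepSet_union_outerPartners hx hy).isCover_indicator_compl hx').exists_isBasicCover_le
  have ha0 : ∀ v ∈ B ∪ outerPartners C A, a v = 0 := fun v hv =>
    Nat.le_zero.mp ((hle v).trans_eq (Set.indicator_of_notMem (Set.notMem_compl_iff.mpr hv) _))
  refine ⟨a, ha, fun v hv => ?_, fun v hv => ha0 v (.inl hv), fun u z hu hz huz => ?_⟩
  · have := (hb.adj hv hy).2 a ha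
    have := ha0 y (.inl hy)
    omega
  rcases hb.mem_or hz with hzA | hzB
  · obtain ⟨w, huw⟩ := hG.exists_zeroOne_adj huz
    have hwP : w ∈ outerPartners C A :=
      ⟨fun hw => hu ((C.mem_supp_congr_adj huw).mpr hw), u, huw, z, hzA, huz⟩
    have := huw.2 a ha
    have := ha0 w (.inr hwP)
    omega
  · have := ha.1.2 u z huz
    have := ha0 z (.inl hzB)
    have := ha.le_one u
    omega

theorem isBasicCover_swap (hG : IsGraphDomain G) (hb : IsCompBipartition (ZeroOne G) C A B)
    {a : V → ℕ} (ha : IsBasicCover G 1 a) (hA : ∀ v ∈ A, a v = 1) (hB : ∀ v ∈ B, a v = 0)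
    (hN : ∀ u z, u ∉ C.supp → z ∈ C.supp → G.Adj u z → a u = 1) {x y : V} (hx : x ∈ A)
    (hy : y ∈ B) {b : V → ℕ} (hbC : ∀ v ∈ C.supp, b v = 1 - a v)
    (hbC' : ∀ v ∉ C.supp, b v = a v) : IsBasicCover G 1 b := by
  have hx' := hb.left_subset hx
  have hy' := hb.symm.left_subset hy
  have hle (v : V) : b v ≤ 1 := by
    by_cases hv : v ∈ C.supp
    · rw [hbC v hv]
      omega
    · rw [hbC' v hv]
      exact ha.le_one v
  refine isBasicCover_of_le_one
    ⟨Function.ne_iff.mpr ⟨y, by simp [hbC y hy', hB y hy]⟩, fun i j hij => ?_⟩ hle (fun v hv => ?_)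
  · by_cases hi : i ∈ C.supp <;> by_cases hj : j ∈ C.supp
    · rw [hbC i hi, hbC j hj]
      rcases hb.mem_or hi with hiA | hiB
      · rcases hb.mem_or hj with hjA | hjB
        · exact (hb.symm.not_adj_of_mem_right hy hiA hjA hij).elim
        · rw [hB j hjB]
          omega
      · rw [hB i hiB]
        omega
    · rw [hbC' j hj, hN j i hj hi hij.symm]
      omega
    · rw [hbC' i hi, hN i j hi hj hij]
      omega
    · rw [hbC' i hi, hbC' j hj]
      exact ha.1.2 i j hij
  by_cases hvC : v ∈ C.supp
  · rw [hbC v hvC] at hv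
    have hvB : v ∈ B := (hb.mem_or hvC).resolve_left fun hvA => by rw [hA v hvA] at hv; omega
    exact ⟨x, (hb.adj hx hvB).1.symm, by rw [hbC x hx', hA x hx]⟩
  rw [hbC' v hvC] at hv
  have hvx : v ≠ x := fun h => hvC (h ▸ hx')
  obtain ⟨u, hvu, -⟩ := ha.exists_adj_add_eq hvx (by omega) (by rw [hA x hx]; omega)
  obtain ⟨w, hvw⟩ := hG.exists_zeroOne_adj hvu
  have hwC : w ∉ C.supp := fun hw => hvC ((C.mem_supp_congr_adj hvw).mpr hw)
  have := hvw.2 a ha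
  exact ⟨w, hvw.1, by rw [hbC' w hwC]; omega⟩

end IsCompBipartition

/-- Let `G` be a domain, `H` a connected component of `G^{0-1}` with
bipartition `A ∪ B`.  Then there is a basic `1`-cover `a` of `G` which is `1` on `A` and
`0` on `B`, such that the function `b` obtained from `a` by swapping its values on the
vertices of `H` (i.e. `b v = 1 - a v` for `v` in `H` and `b v = a v` elsewhere) is also a
basic `1`-cover of `G`. -/
theorem exists_basic_cover_swappable_on_component (G : SimpleGraph V)
    (hG : IsGraphDomain G)
    (C : (ZeroOne G).ConnectedComponent) (hC : C.supp ⊆ {v : V | ∃ w, G.Adj v w})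
    (A B : Set V) (hb : IsCompBipartition (ZeroOne G) C A B) :
    ∃ a : V → ℕ, IsBasicCover G 1 a ∧ (∀ v ∈ A, a v = 1) ∧ (∀ v ∈ B, a v = 0) ∧
      ∃ b : V → ℕ, IsBasicCover G 1 b ∧
        (∀ v ∈ C.supp, b v = 1 - a v) ∧ (∀ v ∉ C.supp, b v = a v) := by
  classical
  obtain ⟨⟨x, hx⟩, ⟨y, hy⟩⟩ := hb.nonempty_left_right hG hC
  obtain ⟨a, ha, hA, hB, hN⟩ := hb.exists_isBasicCover_eq_one_on_boundary hG hx hy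
  have hbC (v : V) (hv : v ∈ C.supp) : (if v ∈ C.supp then 1 - a v else a v) = 1 - a v := if_pos hv
  have hbC' (v : V) (hv : v ∉ C.supp) : (if v ∈ C.supp then 1 - a v else a v) = a v := if_neg hv
  exact ⟨a, ha, hA, hB, _, hb.isBasicCover_swap hG ha hA hB hN hx hy hbC hbC', hbC, hbC'⟩
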